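/- Let F : ℝ ∖ {0} → ℝ be differentiable and even (F(−u) = F(u) for all u ≠ 0). Then the following are equivalent: (i) T₃(F, x) = 0 for all pairwise distinct real x₁, x₂, x₃ (the classical functional equation with n = 3); (ii) for all nonzero real x, y, z with x + y + z = 0, the determinant of the 3×3 matrix with rows (1, 1, 1), (F(x), F(y), F(z)), (F′(x), F′(y), F′(z)) vanishes. -/
import Mathlib


/-- The classical sum `T_n(F, x) = ∑_j ∑_{l ≠ j} F′(x_j − x_l) ∏_{m ≠ j,l} F(x_j − x_m)`. -/
noncomputable def classicalSumR (F : ℝ → ℝ) (n : ℕ) (x : Fin n → ℝ) : ℝ :=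
  ∑ j : Fin n, ∑ l ∈ Finset.univ.erase j,
    deriv F (x j - x l) * ∏ m ∈ (Finset.univ.erase j).erase l, F (x j - x m)

lemma classicalSumR_three (F : ℝ → ℝ) (x : Fin 3 → ℝ) :
    classicalSumR F 3 x =
      deriv F (x 0 - x 1) * F (x 0 - x 2) + deriv F (x 0 - x 2) * F (x 0 - x 1)
      + (deriv F (x 1 - x 0) * F (x 1 - x 2) + deriv F (x 1 - x 2) * F (x 1 - x 0))
      + (deriv F (x 2 - x 0) * F (x 2 - x 1) + deriv F (x 2 - x 1) * F (x 2 - x 0)) := by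
  simp only [classicalSumR, Fin.sum_univ_three,
    show (Finset.univ.erase (0:Fin 3)) = {1,2} from by decide,
    show (Finset.univ.erase (1:Fin 3)) = {0,2} from by decide,
    show (Finset.univ.erase (2:Fin 3)) = {0,1} from by decide,
    show ({1,2} : Finset (Fin 3)).erase 1 = {2} from by decide,
    show ({1,2} : Finset (Fin 3)).erase 2 = {1} from by decide,
    show ({0,2} : Finset (Fin 3)).erase 0 = {2} from by decide,
    show ({0,2} : Finset (Fin 3)).erase 2 = {0} from by decide,
    show ({0,1} : Finset (Fin 3)).erase 0 = {1} from by decide,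
    show ({0,1} : Finset (Fin 3)).erase 1 = {0} from by decide,
    Finset.sum_pair (by decide : (1:Fin 3) ≠ 2),
    Finset.sum_pair (by decide : (0:Fin 3) ≠ 2),
    Finset.sum_pair (by decide : (0:Fin 3) ≠ 1),
    Finset.prod_singleton]

lemma deriv_odd_of_even (F : ℝ → ℝ) (heven : ∀ u : ℝ, u ≠ 0 → F (-u) = F u)
    (t : ℝ) (ht : t ≠ 0) : deriv F (-t) = - deriv F t := by
  have h : F =ᶠ[nhds (-t)] (fun x => F (-x)) := by
    filter_upwards [isOpen_compl_singleton.mem_nhds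
      (show (-t) ∈ ({(0:ℝ)}ᶜ : Set ℝ) by simpa using ht)] with u hu
    exact (heven u (by simpa using hu)).symm
  rw [h.deriv_eq, deriv_comp_neg, neg_neg]

lemma inj_three {a b c : ℝ} (h1 : a ≠ b) (h2 : b ≠ c) (h3 : a ≠ c) :
    Function.Injective ![a, b, c] := by
  intro i j hij
  fin_cases i <;> fin_cases j <;>
    simp only [Matrix.cons_val_zero, Matrix.cons_val_one, Matrix.head_cons,
      Matrix.cons_val_two, Matrix.tail_cons] at hij <;>
    first
      | rfl
      | exact absurd hij h1
      | exact absurd hij h2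
      | exact absurd hij h3
      | exact absurd hij.symm h1
      | exact absurd hij.symm h2
      | exact absurd hij.symm h3

/-- For a differentiable even function `F` on `ℝ ∖ {0}`, the classical functional
equation `T₃(F, x) = 0` (for pairwise distinct `x₁,x₂,x₃`) is equivalent to the
determinant functional equation
`det [[1,1,1],[F(x),F(y),F(z)],[F′(x),F′(y),F′(z)]] = 0` for nonzero `x,y,z`
with `x + y + z = 0`. -/
theorem classical_iff_det (F : ℝ → ℝ)
    (hdiff : ∀ u : ℝ, u ≠ 0 → DifferentiableAt ℝ F u)
    (heven : ∀ u : ℝ, u ≠ 0 → F (-u) = F u) :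
    (∀ x : Fin 3 → ℝ, Function.Injective x → classicalSumR F 3 x = 0) ↔
    (∀ x y z : ℝ, x ≠ 0 → y ≠ 0 → z ≠ 0 → x + y + z = 0 →
      Matrix.det !![(1 : ℝ), 1, 1; F x, F y, F z;
        deriv F x, deriv F y, deriv F z] = 0) := by
  have key : ∀ p q r : ℝ, p ≠ q → q ≠ r → r ≠ p →
      classicalSumR F 3 ![p, q, r] =
      Matrix.det !![(1 : ℝ), 1, 1; F (p-q), F (q-r), F (r-p);
        deriv F (p-q), deriv F (q-r), deriv F (r-p)] := by
    intro p q r hpq hqr hrp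
    have h1 : p - q ≠ 0 := sub_ne_zero.mpr hpq
    have h2 : q - r ≠ 0 := sub_ne_zero.mpr hqr
    have h3 : r - p ≠ 0 := sub_ne_zero.mpr hrp
    have e1 : F (q - p) = F (p - q) := by rw [show q - p = -(p - q) by ring, heven _ h1]
    have e2 : F (r - q) = F (q - r) := by rw [show r - q = -(q - r) by ring, heven _ h2]
    have e3 : F (p - r) = F (r - p) := by rw [show p - r = -(r - p) by ring, heven _ h3]
    have d1 : deriv F (q - p) = - deriv F (p - q) := by
      rw [show q - p = -(p - q) by ring, deriv_odd_of_even F heven _ h1]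
    have d2 : deriv F (r - q) = - deriv F (q - r) := by
      rw [show r - q = -(q - r) by ring, deriv_odd_of_even F heven _ h2]
    have d3 : deriv F (p - r) = - deriv F (r - p) := by
      rw [show p - r = -(r - p) by ring, deriv_odd_of_even F heven _ h3]
    rw [classicalSumR_three]
    simp [Matrix.det_fin_three]
    rw [e1, e2, e3, d1, d2, d3]
    ring
  constructor
  · intro h x y z hx hy hz hsum
    have hab : x + y ≠ y := fun hc => hx (by linarith)
    have hbc : y ≠ (0 : ℝ) := hy
    have hac : x + y ≠ (0 : ℝ) := fun hc => hz (by linarith)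
    have := h ![x + y, y, 0] (inj_three hab hbc hac)
    rw [key (x + y) y 0 hab hbc (Ne.symm hac)] at this
    have ex : x + y - y = x := by ring
    have ey : y - (0:ℝ) = y := by ring
    have ez : (0:ℝ) - (x + y) = z := by linarith
    rw [ex, ey, ez] at this
    exact this
  · intro h x hinj
    have hx01 : x 0 ≠ x 1 := fun hc => absurd (hinj hc) (by decide)
    have hx12 : x 1 ≠ x 2 := fun hc => absurd (hinj hc) (by decide)
    have hx20 : x 2 ≠ x 0 := fun hc => absurd (hinj hc) (by decide)
    have hxeq : x = ![x 0, x 1, x 2] := by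
      funext i; fin_cases i <;> simp
    rw [hxeq, key (x 0) (x 1) (x 2) hx01 hx12 hx20]
    exact h _ _ _ (sub_ne_zero.mpr hx01) (sub_ne_zero.mpr hx12) (sub_ne_zero.mpr hx20)
      (by ring)
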